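/- Let A be a unital C*-algebra carrying a faithful tracial state τ, and let Δ : A → A be an approximately 2-local derivation such that for every pair x, y ∈ A the approximating derivations can be chosen inner, i.e. there exists a sequence (mₙ) of elements of A with Δ(x) = limₙ (mₙx − xmₙ) and Δ(y) = limₙ (mₙy − ymₙ) in norm. Then Δ is a derivation: it is ℂ-linear and satisfies Δ(ab) = aΔ(b) + Δ(a)b for all a, b ∈ A. -/

import Mathlib

open scoped ComplexOrder

open Filter Topology

/-!
Since `τ` vanishes on commutators and `Δ x`, `Δ y` are simultaneous limits of `mₙ x - x mₙ` and
`mₙ y - y mₙ`, we get `τ (Δ x * y) = -τ (x * Δ y)`. Faithfulness makes the pairing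
`(u, v) ↦ τ (u * v)` nondegenerate, so `Δ` is linear, and the pair `(x, x * x)` shows that it is a
Jordan derivation. A C*-algebra is semiprime and 2-torsion free, and on such rings Jordan
derivations are derivations (Brešar): the defect `δ(a, b) = D (a b) - D a b - a D b` satisfies
`δ(a, b) x ⁅a, b⁆ + ⁅a, b⁆ x δ(a, b) = 0`, which semiprimeness upgrades to `δ(a, b) x ⁅c, d⁆ = 0`.
Hence `δ(a, b)` is central, and `2 δ(a, b) = D ⁅a, b⁆ - ⁅D a, b⁆ - ⁅a, D b⁆` gives `δ(a, b)³ = 0`.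
-/

theorem add_mul_mul_add_eq_of_mul_mul_eq_zero {R : Type*} [Ring R] {p₁ p₂ q₁ q₂ x : R}
    (h₁ : p₁ * x * q₁ = 0) (h₂ : p₂ * x * q₂ = 0) :
    (p₁ + p₂) * x * (q₁ + q₂) = p₁ * x * q₂ + p₂ * x * q₁ := by
  linear_combination (norm := noncomm_ring) h₁ + h₂

def IsSemiprimeRing (R : Type*) [Mul R] [Zero R] : Prop :=
  ∀ a : R, (∀ x, a * x * a = 0) → a = 0

namespace IsSemiprimeRing

variable {R : Type*} [Ring R] (hR : IsSemiprimeRing R) {a b : R}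
include hR

theorem mul_mul_eq_zero_comm (h : ∀ x, a * x * b = 0) (x : R) : b * x * a = 0 :=
  hR _ fun y => by
    rw [show b * x * a * y * (b * x * a) = b * x * (a * y * b) * x * a by noncomm_ring, h]
    simp

theorem mul_mul_eq_zero_of_add_eq_zero {c d : R} (h : ∀ x, a * x * b + c * x * d = 0)
    (hbc : ∀ x, b * x * c = 0) (x : R) : a * x * b = 0 :=
  hR _ fun y => by
    linear_combination (norm := noncomm_ring) (a * x * b * y) * h x - (a * x) * hbc y * (x * d)

theorem mul_mul_eq_zero_of_mul_mul_add_mul_mul_eq_zero [IsAddTorsionFree R]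
    (h : ∀ x, a * x * b + b * x * a = 0) (x : R) : a * x * b = 0 := by
  refine hR _ fun y => ?_
  rw [← two_nsmul_eq_zero, two_nsmul]
  linear_combination (norm := noncomm_ring)
    h (x * b * y * a * x) + h x * (y * a * x * b) - (b * x) * h (y * a * x)

theorem commute_of_mul_mul_lie_eq_zero (h : ∀ x u v : R, a * x * ⁅u, v⁆ = 0) (z : R) :
    Commute a z :=
  commute_iff_lie_eq.mpr <| hR _ fun x => by
    rw [show ⁅a, z⁆ * x * ⁅a, z⁆ = a * (z * x) * ⁅a, z⁆ - z * (a * x * ⁅a, z⁆) by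
      rw [Ring.lie_def a z]; noncomm_ring, h, h]
    simp

theorem eq_zero_of_commute_of_mul_self_eq_zero (hc : ∀ z, Commute a z) (h : a * a = 0) :
    a = 0 :=
  hR _ fun x => by rw [(hc x).eq, mul_assoc, h, mul_zero]

end IsSemiprimeRing

theorem CStarRing.isSemiprimeRing {A : Type*} [NonUnitalNormedRing A] [StarRing A] [CStarRing A] :
    IsSemiprimeRing A := fun a h => by
  have hb : star (star a * a) * (star a * a) = 0 := by
    rw [star_mul, star_star, mul_assoc, ← mul_assoc a, h, mul_zero]
  rwa [CStarRing.star_mul_self_eq_zero_iff, CStarRing.star_mul_self_eq_zero_iff] at hb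

section JordanDerivation

variable {R : Type*} [Ring R]

def IsJordanDerivation (D : R →+ R) : Prop :=
  ∀ x, D (x * x) = D x * x + x * D x

def derivationDefect (D : R →+ R) (a b : R) : R :=
  D (a * b) - D a * b - a * D b

variable {D : R →+ R}

theorem derivationDefect_add_left (a c b : R) :
    derivationDefect D (a + c) b = derivationDefect D a b + derivationDefect D c b := by
  simp only [derivationDefect, add_mul, map_add]; abel

theorem derivationDefect_add_right (a b c : R) :
    derivationDefect D a (b + c) = derivationDefect D a b + derivationDefect D a c := by
  simp only [derivationDefect, mul_add, map_add]; abel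

namespace IsJordanDerivation

variable (hD : IsJordanDerivation D)
include hD

theorem map_mul_add_mul_comm (x y : R) :
    D (x * y + y * x) = D x * y + x * D y + D y * x + y * D x := by
  have h := hD (x + y)
  simp only [add_mul, mul_add, map_add, hD x, hD y] at h ⊢
  linear_combination (norm := noncomm_ring) h

theorem derivationDefect_add_derivationDefect_swap (a b : R) :
    derivationDefect D a b + derivationDefect D b a = 0 := by
  simp only [derivationDefect]
  linear_combination (norm := noncomm_ring) (map_add D (a * b) (b * a)).symm.trans
    (hD.map_mul_add_mul_comm a b)

variable [IsAddTorsionFree R]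

theorem map_mul_mul_self (x y : R) : D (x * y * x) = D x * y * x + x * D y * x + x * y * D x := by
  apply nsmul_right_injective two_ne_zero
  simp only [two_nsmul]
  rw [← map_add, show x * y * x + x * y * x
      = x * (x * y + y * x) + (x * y + y * x) * x - (x * x * y + y * (x * x)) by noncomm_ring,
    map_sub, hD.map_mul_add_mul_comm, hD.map_mul_add_mul_comm, hD.map_mul_add_mul_comm, hD x]
  noncomm_ring

theorem map_mul_mul_add_mul_mul (x y z : R) :
    D (x * y * z + z * y * x) = D x * y * z + x * D y * z + x * y * D z
      + D z * y * x + z * D y * x + z * y * D x := by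
  have h := hD.map_mul_mul_self (x + z) y
  simp only [add_mul, mul_add, map_add, hD.map_mul_mul_self x y, hD.map_mul_mul_self z y] at h ⊢
  linear_combination (norm := noncomm_ring) h

theorem derivationDefect_mul_mul_lie_add (a b x : R) :
    derivationDefect D a b * x * ⁅a, b⁆ + ⁅a, b⁆ * x * derivationDefect D a b = 0 := by
  have h := hD.map_mul_mul_add_mul_mul (a * b) x (b * a)
  rw [show a * b * x * (b * a) + b * a * x * (a * b) = a * (b * x * b) * a + b * (a * x * a) * b by
    noncomm_ring, map_add, hD.map_mul_mul_self, hD.map_mul_mul_self, hD.map_mul_mul_self,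
    hD.map_mul_mul_self] at h
  have hswap := hD.derivationDefect_add_derivationDefect_swap a b
  simp only [derivationDefect, Ring.lie_def] at hswap ⊢
  linear_combination (norm := noncomm_ring) h + (a * b * x) * hswap + hswap * (x * (a * b))

variable (hR : IsSemiprimeRing R)
include hR

theorem derivationDefect_mul_mul_lie_self (a b x : R) :
    derivationDefect D a b * x * ⁅a, b⁆ = 0 :=
  hR.mul_mul_eq_zero_of_mul_mul_add_mul_mul_eq_zero (hD.derivationDefect_mul_mul_lie_add a b) x

theorem derivationDefect_mul_mul_lie_left (a b c x : R) :
    derivationDefect D a b * x * ⁅a, c⁆ = 0 := by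
  refine hR.mul_mul_eq_zero_of_add_eq_zero (d := ⁅a, b⁆) (fun x => ?_)
    (hR.mul_mul_eq_zero_comm (hD.derivationDefect_mul_mul_lie_self hR a c)) x
  rw [← add_mul_mul_add_eq_of_mul_mul_eq_zero (hD.derivationDefect_mul_mul_lie_self hR a b x)
    (hD.derivationDefect_mul_mul_lie_self hR a c x), ← derivationDefect_add_right,
    show ⁅a, b⁆ + ⁅a, c⁆ = ⁅a, b + c⁆ by simp only [Ring.lie_def]; noncomm_ring]
  exact hD.derivationDefect_mul_mul_lie_self hR a (b + c) x

theorem derivationDefect_mul_mul_lie (a b c d x : R) :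
    derivationDefect D a b * x * ⁅c, d⁆ = 0 := by
  refine hR.mul_mul_eq_zero_of_add_eq_zero (d := ⁅a, d⁆) (fun x => ?_)
    (hR.mul_mul_eq_zero_comm (hD.derivationDefect_mul_mul_lie_left hR c b d)) x
  rw [← add_mul_mul_add_eq_of_mul_mul_eq_zero (hD.derivationDefect_mul_mul_lie_left hR a b d x)
    (hD.derivationDefect_mul_mul_lie_left hR c b d x), ← derivationDefect_add_left,
    show ⁅a, d⁆ + ⁅c, d⁆ = ⁅a + c, d⁆ by simp only [Ring.lie_def]; noncomm_ring]
  exact hD.derivationDefect_mul_mul_lie_left hR (a + c) b d x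

theorem derivationDefect_mul_lie (a b u v : R) : derivationDefect D a b * ⁅u, v⁆ = 0 := by
  simpa using hD.derivationDefect_mul_mul_lie hR a b u v 1

theorem commute_derivationDefect (a b z : R) : Commute (derivationDefect D a b) z :=
  hR.commute_of_mul_mul_lie_eq_zero (fun x u v => hD.derivationDefect_mul_mul_lie hR a b u v x) z

theorem derivationDefect_mul_map_lie (a b : R) :
    derivationDefect D a b * D ⁅a, b⁆
      = derivationDefect D a b * derivationDefect D a b
        + derivationDefect D a b * derivationDefect D a b := by
  have h2 : derivationDefect D a b + derivationDefect D a b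
      = D ⁅a, b⁆ - ⁅D a, b⁆ - ⁅a, D b⁆ := by
    have h := hD.derivationDefect_add_derivationDefect_swap a b
    simp only [derivationDefect, Ring.lie_def, map_sub] at h ⊢
    linear_combination (norm := noncomm_ring) h
  rw [← mul_add, h2, mul_sub, mul_sub, hD.derivationDefect_mul_lie hR,
    hD.derivationDefect_mul_lie hR, sub_zero, sub_zero]

theorem derivationDefect_mul_self_mul_map_lie (a b : R) :
    derivationDefect D a b * derivationDefect D a b * D ⁅a, b⁆ = 0 := by
  have hJ := hD.map_mul_add_mul_comm (derivationDefect D a b) ⁅a, b⁆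
  rw [← (hD.commute_derivationDefect hR a b _).eq, hD.derivationDefect_mul_lie hR, add_zero,
    map_zero] at hJ
  have h₁ := hD.derivationDefect_mul_mul_lie hR a b a b (D (derivationDefect D a b))
  have h₂ := hD.derivationDefect_mul_lie hR a b a b
  have h₃ := (hD.commute_derivationDefect hR a b (D ⁅a, b⁆)).eq
  set G := derivationDefect D a b
  rw [← two_nsmul_eq_zero, two_nsmul]
  linear_combination (norm := noncomm_ring) -(G * hJ) - h₁ - h₂ * D G + G * h₃

theorem derivationDefect_eq_zero (a b : R) : derivationDefect D a b = 0 := by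
  have hG := hD.commute_derivationDefect hR a b
  have hG3 : derivationDefect D a b * derivationDefect D a b * derivationDefect D a b = 0 := by
    rw [← two_nsmul_eq_zero, two_nsmul, mul_assoc, ← mul_add, ← hD.derivationDefect_mul_map_lie hR,
      ← mul_assoc]
    exact hD.derivationDefect_mul_self_mul_map_lie hR a b
  refine hR.eq_zero_of_commute_of_mul_self_eq_zero hG
    (hR.eq_zero_of_commute_of_mul_self_eq_zero (fun z => (hG z).mul_left (hG z)) ?_)
  rw [← mul_assoc, hG3, zero_mul]

theorem map_mul (a b : R) : D (a * b) = a * D b + D a * b := by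
  have h := hD.derivationDefect_eq_zero hR a b
  simp only [derivationDefect] at h
  linear_combination (norm := noncomm_ring) h

end IsJordanDerivation

end JordanDerivation

section ApproxInnerTwoLocal

variable {A : Type*} [Ring A] [TopologicalSpace A] [IsTopologicalRing A]

def IsApproxInnerTwoLocal (Δ : A → A) : Prop :=
  ∀ x y : A, ∃ m : ℕ → A,
    Tendsto (fun n => m n * x - x * m n) atTop (𝓝 (Δ x)) ∧
    Tendsto (fun n => m n * y - y * m n) atTop (𝓝 (Δ y))

namespace IsApproxInnerTwoLocal

variable {Δ : A → A} (hΔ : IsApproxInnerTwoLocal Δ)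
include hΔ

theorem map_mul_self [T2Space A] (x : A) : Δ (x * x) = Δ x * x + x * Δ x := by
  obtain ⟨m, hx, hxx⟩ := hΔ x (x * x)
  refine tendsto_nhds_unique hxx ?_
  convert (hx.mul_const x).add (hx.const_mul x) using 2 with n
  noncomm_ring

variable [Algebra ℂ A] (τ : A →L[ℂ] ℂ) (hτtr : ∀ a b : A, τ (a * b) = τ (b * a))
include hτtr

theorem trace_map_mul (x y : A) : τ (Δ x * y) = -τ (x * Δ y) := by
  obtain ⟨m, hx, hy⟩ := hΔ x y
  have hlim : Tendsto (fun n => τ (m n * (x * y) - x * y * m n)) atTop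
      (𝓝 (τ (Δ x * y + x * Δ y))) := by
    refine (τ.continuous.tendsto _).comp ?_
    convert (hx.mul_const y).add (hy.const_mul x) using 2
    noncomm_ring
  have hzero (n : ℕ) : τ (m n * (x * y) - x * y * m n) = 0 := by rw [map_sub, hτtr, sub_self]
  simp only [hzero, map_add] at hlim
  linear_combination tendsto_nhds_unique hlim tendsto_const_nhds

end IsApproxInnerTwoLocal

end ApproxInnerTwoLocal

theorem eq_of_forall_trace_mul_eq {A : Type*} [Ring A] [StarRing A] [TopologicalSpace A]
    [Module ℂ A] {τ : A →L[ℂ] ℂ} (hτtr : ∀ a b : A, τ (a * b) = τ (b * a))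
    (hτfaith : ∀ a : A, τ (star a * a) = 0 → a = 0) {u v : A}
    (h : ∀ z, τ (u * z) = τ (v * z)) : u = v := by
  refine sub_eq_zero.mp (hτfaith _ ?_)
  rw [hτtr, sub_mul, map_sub, h, sub_self]

section FaithfulTrace

variable {A : Type*} [Ring A] [StarRing A] [TopologicalSpace A] [IsTopologicalRing A]
  [Algebra ℂ A] {τ : A →L[ℂ] ℂ} (hτtr : ∀ a b : A, τ (a * b) = τ (b * a))
  (hτfaith : ∀ a : A, τ (star a * a) = 0 → a = 0) {Δ : A → A} (hΔ : IsApproxInnerTwoLocal Δ)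
include hτtr hτfaith hΔ

theorem IsApproxInnerTwoLocal.map_add (u v : A) : Δ (u + v) = Δ u + Δ v :=
  eq_of_forall_trace_mul_eq hτtr hτfaith fun z => by
    simp only [add_mul, _root_.map_add, hΔ.trace_map_mul τ hτtr]
    ring

theorem IsApproxInnerTwoLocal.map_smul (c : ℂ) (x : A) : Δ (c • x) = c • Δ x :=
  eq_of_forall_trace_mul_eq hτtr hτfaith fun z => by
    simp only [smul_mul_assoc, _root_.map_smul, hΔ.trace_map_mul τ hτtr, smul_eq_mul]
    ring

end FaithfulTrace

theorem approxTwoLocal_inner_is_derivation_of_faithful_trace_general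
    {A : Type*} [NormedRing A] [StarRing A] [CStarRing A] [NormedAlgebra ℂ A]
    (τ : A →L[ℂ] ℂ)
    (hτtr : ∀ a b : A, τ (a * b) = τ (b * a))
    (hτfaith : ∀ a : A, τ (star a * a) = 0 → a = 0)
    (Δ : A → A)
    (hΔ : ∀ x y : A, ∃ m : ℕ → A,
      Tendsto (fun n => m n * x - x * m n) atTop (𝓝 (Δ x)) ∧
      Tendsto (fun n => m n * y - y * m n) atTop (𝓝 (Δ y))) :
    (∀ u v : A, Δ (u + v) = Δ u + Δ v) ∧
    (∀ (c : ℂ) (x : A), Δ (c • x) = c • Δ x) ∧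
    (∀ a b : A, Δ (a * b) = a * Δ b + Δ a * b) := by
  have hΔ' : IsApproxInnerTwoLocal Δ := hΔ
  have hadd := hΔ'.map_add hτtr hτfaith
  have hJordan : IsJordanDerivation (AddMonoidHom.mk' Δ hadd) := hΔ'.map_mul_self
  have : IsAddTorsionFree A := .of_isTorsionFree ℂ A
  exact ⟨hadd, hΔ'.map_smul hτtr hτfaith, hJordan.map_mul CStarRing.isSemiprimeRing⟩

/-- Let `A` be a unital C*-algebra carrying a faithful tracial state
`τ`, and let `Δ : A → A` be an approximately 2-local derivation whose approximating
derivations can be chosen inner: for every pair `x, y ∈ A` there is a sequence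
`(mₙ)` in `A` with `Δ x = limₙ (mₙ * x - x * mₙ)` and `Δ y = limₙ (mₙ * y - y * mₙ)`
in norm. Then `Δ` is a derivation: it is ℂ-linear and satisfies
`Δ (a * b) = a * Δ b + Δ a * b`. -/
theorem approxTwoLocal_inner_is_derivation_of_faithful_trace
    {A : Type*} [NormedRing A] [StarRing A] [CStarRing A] [NormedAlgebra ℂ A]
    [CompleteSpace A] [StarModule ℂ A]
    (τ : A →L[ℂ] ℂ)
    (hτ1 : τ 1 = 1)
    (hτpos : ∀ a : A, 0 ≤ τ (star a * a))
    (hτtr : ∀ a b : A, τ (a * b) = τ (b * a))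
    (hτfaith : ∀ a : A, τ (star a * a) = 0 → a = 0)
    (Δ : A → A)
    (hΔ : ∀ x y : A, ∃ m : ℕ → A,
      Tendsto (fun n => m n * x - x * m n) atTop (𝓝 (Δ x)) ∧
      Tendsto (fun n => m n * y - y * m n) atTop (𝓝 (Δ y))) :
    (∀ u v : A, Δ (u + v) = Δ u + Δ v) ∧
    (∀ (c : ℂ) (x : A), Δ (c • x) = c • Δ x) ∧
    (∀ a b : A, Δ (a * b) = a * Δ b + Δ a * b) :=
  approxTwoLocal_inner_is_derivation_of_faithful_trace_general τ hτtr hτfaith Δ hΔ
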